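/- arXiv:2507.02247 — 2 statements merged into one kernel-verified Lean document; each statement's English description precedes it below -/
import Mathlib

section
/- Let s > 0 and let g : ℝ → ℝ be defined by g(x) = Σ_{j=3}^∞ j^{−2} 2^{−js} cos((11/8)·2^j·x); this series converges uniformly on ℝ and g is continuous and 2π-periodic. For n ≥ 3 set t_n = 8π/(11·2^n). Then the Fourier coefficient of the 2π-periodic function x ↦ g(x − t_n) − g(x) at the frequency 11·2^{n−3}, with normalization ĝ(k) = (1/(2π)) ∫₀^{2π} g(x) e^{−ikx} dx, equals −n^{−2}·2^{−ns}. -/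
open Real Filter Complex

/-!
The series is dominated by `∑ |aⱼ|` with `aⱼ = (j+3)^{-2} 2^{-(j+3)s}` summable, so by the
Weierstrass M-test it converges uniformly to a continuous function, which is `2π`-periodic since
its frequencies `mⱼ = (11/8)·2^{j+3} = 11·2^j` are integers. Integrating termwise against
`e^{-iKx}` with `K = 11·2^{n-3}`, orthogonality kills every term but the one with `mⱼ = K`; the
translate `g(· - t)` multiplies its coefficient by `e^{-iKt}`, so the coefficient of
`g(· - t_n) - g` is `aₙ₋₃ (e^{-iKt_n} - 1) / 2 = -aₙ₋₃` because `K t_n = π`.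
-/

lemma integral_exp_int_mul_I (m : ℤ) :
    ∫ x in (0:ℝ)..(2 * π), Complex.exp (m * I * x)
      = if m = 0 then ((2 * π : ℝ) : ℂ) else 0 := by
  split_ifs with hm
  · simp [hm]
  · have hc : (m : ℂ) * I ≠ 0 := mul_ne_zero (Int.cast_ne_zero.2 hm) I_ne_zero
    rw [integral_exp_mul_complex hc, ofReal_zero, mul_zero, Complex.exp_zero,
      show (m : ℂ) * I * ((2 * π : ℝ) : ℂ) = m * (2 * π * I) by push_cast; ring,
      exp_int_mul_two_pi_mul_I, sub_self, zero_div]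

lemma integral_cos_mul_exp (m K : ℕ) (hK : 0 < K) (φ : ℝ) :
    ∫ x in (0:ℝ)..(2 * π), (Real.cos (m * x + φ) : ℂ) * Complex.exp (-I * K * x)
      = if m = K then π * Complex.exp (I * φ) else 0 := by
  have hsplit : ∀ x : ℝ, (Real.cos (m * x + φ) : ℂ) * Complex.exp (-I * K * x)
      = Complex.exp (I * φ) / 2 * Complex.exp (((m - K : ℤ) : ℂ) * I * x)
        + Complex.exp (-(I * φ)) / 2 * Complex.exp (((-m - K : ℤ) : ℂ) * I * x) := by
    intro x
    rw [ofReal_cos, Complex.cos, div_mul_eq_mul_div, add_mul, ← Complex.exp_add,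
      ← Complex.exp_add, div_mul_eq_mul_div, div_mul_eq_mul_div, ← Complex.exp_add,
      ← Complex.exp_add, ← add_div]
    congr 3 <;> push_cast <;> ring
  have hint : ∀ (c : ℂ) (k : ℤ),
      IntervalIntegrable (fun x : ℝ => c * Complex.exp (k * I * x))
        MeasureTheory.volume 0 (2 * π) :=
    fun c k => by apply Continuous.intervalIntegrable; fun_prop
  rw [intervalIntegral.integral_congr fun x _ => hsplit x, intervalIntegral.integral_add
    (hint _ _) (hint _ _), intervalIntegral.integral_const_mul, intervalIntegral.integral_const_mul,
    integral_exp_int_mul_I, integral_exp_int_mul_I, if_neg (show (-m - K : ℤ) ≠ 0 by omega),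
    mul_zero, add_zero]
  by_cases h : m = K
  · rw [if_pos (by omega), if_pos h]
    push_cast
    ring
  · rw [if_neg (by omega), if_neg h, mul_zero]

noncomputable def cosSeries (a : ℕ → ℝ) (m : ℕ → ℕ) (x : ℝ) : ℝ :=
  ∑' j, a j * Real.cos (m j * x)

namespace cosSeries

variable {a : ℕ → ℝ} {m : ℕ → ℕ}

lemma norm_term_le (j : ℕ) (x : ℝ) :
    ‖a j * Real.cos (m j * x)‖ ≤ |a j| := by
  rw [norm_mul, Real.norm_eq_abs]
  exact mul_le_of_le_one_right (abs_nonneg _) (Real.norm_eq_abs _ ▸ abs_cos_le_one _)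

lemma hasSum (ha : Summable a) (x : ℝ) :
    HasSum (fun j => a j * Real.cos (m j * x)) (cosSeries a m x) :=
  (ha.abs.of_norm_bounded fun j => norm_term_le j x).hasSum

lemma tendstoUniformly (ha : Summable a) :
    TendstoUniformly (fun N x => ∑ j ∈ Finset.range N, a j * Real.cos (m j * x))
      (cosSeries a m) atTop :=
  tendstoUniformly_tsum_nat ha.abs norm_term_le

lemma continuous (ha : Summable a) : Continuous (cosSeries a m) :=
  (tendstoUniformly ha).continuous (Eventually.of_forall fun _ => by fun_prop).frequently

lemma add_two_pi (x : ℝ) :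
    cosSeries a m (x + 2 * π) = cosSeries a m x := by
  refine tsum_congr fun j => ?_
  rw [mul_add, ← Real.cos_add_nat_mul_two_pi (m j * x) (m j)]

lemma integral_comp_sub_mul_exp (ha : Summable a) (hm : m.Injective) {j₀ : ℕ}
    (hj₀ : 0 < m j₀) (t : ℝ) :
    ∫ x in (0:ℝ)..(2 * π), (cosSeries a m (x - t) : ℂ) * Complex.exp (-I * m j₀ * x)
      = π * a j₀ * Complex.exp (-I * m j₀ * t) := by
  set F : ℕ → ℝ → ℂ := fun j x => a j * ((Real.cos (m j * x + -(m j * t)) : ℂ)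
    * Complex.exp (-I * m j₀ * x))
  have hF : ∀ j x, ‖F j x‖ ≤ |a j| := by
    intro j x
    have hexp : ‖Complex.exp (-I * m j₀ * x)‖ = 1 := by simp [Complex.norm_exp]
    simp only [F, norm_mul, hexp, mul_one, norm_real, Real.norm_eq_abs]
    exact mul_le_of_le_one_right (abs_nonneg _) (abs_cos_le_one _)
  have hterm : ∀ j, ∫ x in (0:ℝ)..(2 * π), F j x
      = if j = j₀ then (π * a j₀ * Complex.exp (-I * m j₀ * t) : ℂ) else 0 := by
    intro j
    rw [intervalIntegral.integral_const_mul, integral_cos_mul_exp _ _ hj₀]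
    simp only [hm.eq_iff]
    split_ifs with h
    · subst h; push_cast; ring_nf
    · rw [mul_zero]
  have hsum : HasSum (fun j => ∫ x in (0:ℝ)..(2 * π), F j x)
      (∫ x in (0:ℝ)..(2 * π),
        (cosSeries a m (x - t) : ℂ) * Complex.exp (-I * m j₀ * x)) := by
    refine intervalIntegral.hasSum_integral_of_dominated_convergence (fun j _ => |a j|)
      (fun j => by fun_prop) (fun j => .of_forall fun x _ => hF j x)
      (.of_forall fun _ _ => ha.abs) intervalIntegrable_const (.of_forall fun x _ => ?_)
    refine ((hasSum_ofReal.2 (hasSum (m := m) ha (x - t))).mul_right _).congr_fun fun j => ?_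
    simp only [F, ← sub_eq_add_neg, ← mul_sub, ofReal_mul, mul_assoc]
  rw [← hsum.unique ((hasSum_ite_eq j₀ _).congr_fun hterm)]

lemma integral_sub_mul_exp (ha : Summable a) (hm : m.Injective) {j₀ : ℕ} (hj₀ : 0 < m j₀)
    (t : ℝ) :
    ∫ x in (0:ℝ)..(2 * π),
        ((cosSeries a m (x - t) - cosSeries a m x : ℝ) : ℂ) * Complex.exp (-I * m j₀ * x)
      = π * a j₀ * (Complex.exp (-I * m j₀ * t) - 1) := by
  have hint : ∀ u : ℝ, IntervalIntegrable
      (fun x : ℝ => (cosSeries a m (x - u) : ℂ) * Complex.exp (-I * m j₀ * x))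
      MeasureTheory.volume 0 (2 * π) := fun u => by
    have := continuous ha (m := m)
    apply Continuous.intervalIntegrable; fun_prop
  have h₀ := integral_comp_sub_mul_exp ha hm hj₀ 0
  simp only [sub_zero, ofReal_zero, mul_zero, Complex.exp_zero] at h₀
  simp only [ofReal_sub, sub_mul]
  rw [intervalIntegral.integral_sub (hint t) (by simpa using hint 0),
    integral_comp_sub_mul_exp ha hm hj₀, h₀, mul_sub, mul_one]

end cosSeries

lemma summable_rpow_neg_two_mul_two_rpow {s : ℝ} (hs : 0 ≤ s) :
    Summable fun j : ℕ => ((j : ℝ) + 3) ^ (-2 : ℝ) * (2 : ℝ) ^ (-((j : ℝ) + 3) * s) := by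
  have hp : Summable fun j : ℕ => ((j : ℝ) + 3) ^ (-2 : ℝ) := by
    simpa using (summable_nat_add_iff 3).2
      (Real.summable_nat_rpow.2 (by norm_num : (-2 : ℝ) < -1))
  refine hp.of_nonneg_of_le (fun j => by positivity) fun j => ?_
  refine mul_le_of_le_one_right (by positivity) (Real.rpow_le_one_of_one_le_of_nonpos one_le_two ?_)
  nlinarith [(j.cast_nonneg : (0 : ℝ) ≤ j)]

/-- For `s > 0`, the series `g(x) = Σ_{j=3}^∞ j^{-2} 2^{-js} cos((11/8)·2^j·x)`
converges uniformly on `ℝ`, `g` is continuous and `2π`-periodic, and for `n ≥ 3` and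
`t_n = 8π/(11·2^n)` the Fourier coefficient of `x ↦ g(x - t_n) - g(x)` at frequency
`11·2^{n-3}` equals `-n^{-2}·2^{-ns}`. -/
theorem stmt_9 (s : ℝ) (hs : 0 < s) (g : ℝ → ℝ)
    (hg : ∀ x : ℝ, g x = ∑' j : ℕ,
      ((j : ℝ) + 3) ^ (-2 : ℝ) * (2 : ℝ) ^ (-(((j : ℝ) + 3)) * s)
        * Real.cos ((11 / 8) * 2 ^ (j + 3) * x)) :
    TendstoUniformly
      (fun N x => ∑ j ∈ Finset.range N,
        ((j : ℝ) + 3) ^ (-2 : ℝ) * (2 : ℝ) ^ (-(((j : ℝ) + 3)) * s)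
          * Real.cos ((11 / 8) * 2 ^ (j + 3) * x))
      g atTop ∧
    Continuous g ∧
    (∀ x : ℝ, g (x + 2 * π) = g x) ∧
    (∀ n : ℕ, 3 ≤ n → ∀ t : ℝ, t = 8 * π / (11 * 2 ^ n) →
      (1 / (2 * (π : ℂ))) * ∫ x in (0:ℝ)..(2 * π),
          ((g (x - t) - g x : ℝ) : ℂ)
            * Complex.exp (-Complex.I * ((11 * 2 ^ (n - 3) : ℕ) : ℂ) * (x : ℂ))
        = -(((n : ℝ) ^ (-2 : ℝ) * (2 : ℝ) ^ (-(n : ℝ) * s) : ℝ) : ℂ)) := by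
  have hfreq : ∀ j : ℕ, (11 / 8 : ℝ) * 2 ^ (j + 3) = ((11 * 2 ^ j : ℕ) : ℝ) := fun j => by
    push_cast; ring
  have ha := summable_rpow_neg_two_mul_two_rpow hs.le
  have hm : (fun j : ℕ => 11 * 2 ^ j).Injective := fun i j h =>
    Nat.pow_right_injective le_rfl (Nat.eq_of_mul_eq_mul_left (by norm_num) h)
  obtain rfl : g = cosSeries
      (fun j : ℕ => ((j : ℝ) + 3) ^ (-2 : ℝ) * (2 : ℝ) ^ (-((j : ℝ) + 3) * s))
      (fun j => 11 * 2 ^ j) := funext fun x => by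
    simp only [hg, cosSeries, hfreq]
  simp only [hfreq]
  refine ⟨cosSeries.tendstoUniformly ha, cosSeries.continuous ha, cosSeries.add_two_pi,
    fun n hn t ht => ?_⟩
  have hphase : ((11 * 2 ^ (n - 3) : ℕ) : ℝ) * t = π := by
    rw [ht, ← Nat.sub_add_cancel hn, pow_add, Nat.add_sub_cancel]
    push_cast
    field_simp
    ring
  rw [cosSeries.integral_sub_mul_exp ha hm (j₀ := n - 3) (by positivity)]
  have hexp : Complex.exp (-I * ((11 * 2 ^ (n - 3) : ℕ) : ℂ) * t) = -1 := by
    rw [show -I * ((11 * 2 ^ (n - 3) : ℕ) : ℂ) * t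
        = -(((11 * 2 ^ (n - 3) : ℕ) * t : ℝ) * I) by push_cast; ring,
      hphase, Complex.exp_neg, exp_pi_mul_I, inv_neg, inv_one]
  have hn3 : ((n - 3 : ℕ) : ℝ) + 3 = n := by rw [Nat.cast_sub hn]; push_cast; ring
  rw [hexp, hn3]
  field_simp
  push_cast
  ring
end

section
/- Let s > 0, let f : ℝ → ℝ be defined by f(x) = Σ_{j=3}^∞ 2^{−js} cos((11/8)·2^j·x), and for n ≥ 3 set λ_n = 1 + 1/n and τ_n = 8nπ/(11·2^n). Then for every real p with 1 ≤ p < ∞ and every n ≥ 3: 2^{ns} · ( ∫₀^{2π} |f(x − λ_n τ_n) − f(x − τ_n)|^p dx )^{1/p} ≥ (2π)^{1/p}, even though τ_n → 0⁺ and λ_n → 1 as n → ∞. -/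
open Real Filter MeasureTheory Topology

/-! The frequencies `11·2^j` of `f` are distinct positive integers, so by orthogonality of cosines
on `[0, 2π]` the coefficient of `cos (11·2^k x)` in `f (x - t)` is `π 2^{-(k+3)s} cos (11·2^k t)`.
For `n = k + 3` the shifts `τ_n` and `λ_n τ_n` turn the phase `11·2^k t` into `nπ` and `(n+1)π`,
so this coefficient of `f (· - λ_n τ_n) - f (· - τ_n)` has modulus `2π 2^{-ns}`, while Hölder's
inequality bounds it by `(2π)^{1 - 1/p}` times the `L^p(0, 2π)` norm of the difference. -/

theorem norm_mul_cos_le (a θ : ℝ) : ‖a * cos θ‖ ≤ |a| := by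
  rw [norm_mul, norm_eq_abs, norm_eq_abs]
  exact mul_le_of_le_one_right (abs_nonneg a) (abs_cos_le_one θ)

theorem integral_cos_int_mul_add (k : ℤ) (c : ℝ) :
    ∫ x in (0:ℝ)..2 * π, cos (k * x + c) = if k = 0 then 2 * π * cos c else 0 := by
  split_ifs with hk
  · simp [hk]
  · rw [intervalIntegral.integral_comp_mul_add cos (Int.cast_ne_zero.mpr hk), integral_cos,
      mul_zero, zero_add, add_comm, sin_add_int_mul_two_pi, sub_self, smul_zero]

theorem integral_cos_mul_sub_mul_cos (m N : ℕ) (hN : N ≠ 0) (t : ℝ) :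
    ∫ x in (0:ℝ)..2 * π, cos (m * (x - t)) * cos (N * x) =
      if m = N then π * cos (N * t) else 0 := by
  have hprod : ∀ x : ℝ, cos (m * (x - t)) * cos (N * x) =
      (cos (((m : ℤ) - N : ℤ) * x + -(m * t)) + cos (((m + N : ℕ) : ℤ) * x + -(m * t))) / 2 := by
    intro x
    have h := two_mul_cos_mul_cos (m * (x - t)) (N * x)
    push_cast
    rw [show (m : ℝ) * (x - t) - N * x = (m - N) * x + -(m * t) by ring,
      show (m : ℝ) * (x - t) + N * x = (m + N) * x + -(m * t) by ring] at h
    linarith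
  have hcont : ∀ (k : ℤ) (c : ℝ),
      IntervalIntegrable (fun x : ℝ => cos (k * x + c)) volume 0 (2 * π) := fun k c =>
    (by fun_prop : Continuous fun x : ℝ => cos (k * x + c)).intervalIntegrable _ _
  simp_rw [hprod]
  rw [intervalIntegral.integral_div, intervalIntegral.integral_add (hcont _ _) (hcont _ _),
    integral_cos_int_mul_add, integral_cos_int_mul_add,
    if_neg (show ((m + N : ℕ) : ℤ) ≠ 0 by omega), cos_neg]
  simp only [sub_eq_zero, Int.natCast_inj]
  split_ifs with hmN
  · subst hmN; ring
  · simp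

theorem continuous_tsum_mul_cos {a : ℕ → ℝ} (ha : Summable fun j => |a j|) (ω : ℕ → ℝ) :
    Continuous fun x => ∑' j, a j * cos (ω j * x) :=
  continuous_tsum (fun j => by fun_prop) ha fun _ _ => norm_mul_cos_le _ _

theorem summable_mul_cos {a : ℕ → ℝ} (ha : Summable fun j => |a j|) (θ : ℕ → ℝ) :
    Summable fun j => a j * cos (θ j) :=
  Summable.of_norm_bounded ha fun _ => norm_mul_cos_le _ _

theorem integral_tsum_mul_cos_mul_sub_mul_cos {a : ℕ → ℝ} (ha : Summable fun j => |a j|)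
    {ω : ℕ → ℕ} (hω : Function.Injective ω) {k : ℕ} (hk : ω k ≠ 0) (t : ℝ) :
    ∫ x in (0:ℝ)..2 * π, (∑' j, a j * cos (ω j * (x - t))) * cos (ω k * x) =
      π * a k * cos (ω k * t) := by
  set F : ℕ → ℝ → ℝ := fun j x => a j * cos (ω j * (x - t)) * cos (ω k * x)
  have hF_meas : ∀ j, AEStronglyMeasurable (F j) (volume.restrict (Set.uIoc 0 (2 * π))) :=
    fun j => (by fun_prop : Continuous (F j)).aestronglyMeasurable
  have hF_bound : ∀ j x, ‖F j x‖ ≤ |a j| := fun j x => by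
    rw [norm_eq_abs, abs_mul, abs_mul, mul_assoc]
    exact mul_le_of_le_one_right (abs_nonneg _)
      (mul_le_one₀ (abs_cos_le_one _) (abs_nonneg _) (abs_cos_le_one _))
  have hF_sum : ∀ x, HasSum (F · x) ((∑' j, a j * cos (ω j * (x - t))) * cos (ω k * x)) :=
    fun x => (summable_mul_cos ha _).hasSum.mul_right _
  have hsum := intervalIntegral.hasSum_integral_of_dominated_convergence (fun j _ => |a j|)
    hF_meas (fun j => ae_of_all _ fun x _ => hF_bound j x) (ae_of_all _ fun _ _ => ha)
    intervalIntegrable_const (ae_of_all _ fun x _ => hF_sum x)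
  refine hsum.unique ?_
  have hterm : ∀ j, ∫ x in (0:ℝ)..2 * π, F j x =
      if j = k then π * a k * cos (ω k * t) else 0 := fun j => by
    simp_rw [F, mul_assoc, intervalIntegral.integral_const_mul,
      integral_cos_mul_sub_mul_cos _ _ hk, hω.eq_iff]
    split_ifs with hjk
    · subst hjk; ring
    · simp
  simp_rw [hterm]
  exact hasSum_ite_eq k _

theorem integral_abs_le_measureReal_rpow_mul {α : Type*} [MeasurableSpace α] {μ : Measure α}
    [IsFiniteMeasure μ] {g : α → ℝ} {p : ℝ} (hp : 1 ≤ p) (hg : MemLp g (ENNReal.ofReal p) μ) :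
    ∫ x, |g x| ∂μ ≤ μ.real Set.univ ^ (1 - 1 / p) * (∫ x, |g x| ^ p ∂μ) ^ (1 / p) := by
  rcases hp.eq_or_lt with rfl | hp
  · simp
  have hH := integral_mul_le_Lp_mul_Lq_of_nonneg (Real.HolderConjugate.conjExponent hp)
    (ae_of_all μ fun x => abs_nonneg (g x)) (ae_of_all μ fun _ => zero_le_one) hg.abs
    (memLp_const 1)
  have hq : p.conjExponent⁻¹ = 1 - p⁻¹ := by
    rw [Real.conjExponent]; field_simp
  simpa [hq, mul_comm] using hH

theorem intervalIntegral_abs_le_rpow_mul {g : ℝ → ℝ} (hg : Continuous g) {a b p : ℝ}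
    (hab : a ≤ b) (hp : 1 ≤ p) :
    ∫ x in a..b, |g x| ≤ (b - a) ^ (1 - 1 / p) * (∫ x in a..b, |g x| ^ p) ^ (1 / p) := by
  obtain ⟨C, hC⟩ := isCompact_Icc.exists_bound_of_continuousOn (s := Set.Icc a b) hg.continuousOn
  have hmem : MemLp g (ENNReal.ofReal p) (volume.restrict (Set.Ioc a b)) :=
    MemLp.of_bound hg.aestronglyMeasurable C
      ((ae_restrict_iff' measurableSet_Ioc).mpr
        (ae_of_all _ fun x hx => hC x (Set.Ioc_subset_Icc_self hx)))
  have := integral_abs_le_measureReal_rpow_mul hp hmem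
  rwa [measureReal_restrict_apply_univ, Real.volume_real_Ioc_of_le hab,
    ← intervalIntegral.integral_of_le hab, ← intervalIntegral.integral_of_le hab] at this

theorem abs_integral_mul_cos_le {g : ℝ → ℝ} (hg : Continuous g) {a b : ℝ} (hab : a ≤ b) (ω : ℝ) :
    |∫ x in a..b, g x * cos (ω * x)| ≤ ∫ x in a..b, |g x| :=
  (intervalIntegral.abs_integral_le_integral_abs hab).trans <|
    intervalIntegral.integral_mono_on hab
      ((by fun_prop : Continuous fun x => |g x * cos (ω * x)|).intervalIntegrable _ _)
      (hg.abs.intervalIntegrable _ _) fun x _ => by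
        rw [abs_mul]; exact mul_le_of_le_one_right (abs_nonneg _) (abs_cos_le_one _)

theorem tendsto_const_mul_div_two_pow_nhdsGT_zero {c : ℝ} (hc : 0 < c) :
    Tendsto (fun n : ℕ => c * n / 2 ^ n) atTop (𝓝[>] 0) := by
  refine tendsto_nhdsWithin_iff.mpr ⟨?_, ?_⟩
  · have h := tendsto_self_mul_const_pow_of_lt_one (r := 1 / 2) (by norm_num) (by norm_num)
    rw [← mul_zero c]
    refine (h.const_mul c).congr fun n => ?_
    rw [div_pow, one_pow]; ring
  · filter_upwards [eventually_ge_atTop 1] with n hn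
    have : (0 : ℝ) < n := by exact_mod_cast hn
    exact Set.mem_Ioi.mpr (by positivity)

theorem rpow_mul_abs_cos_sub_cos_le {a : ℕ → ℝ} (ha : Summable fun j => |a j|)
    {ω : ℕ → ℕ} (hω : Function.Injective ω) {k : ℕ} (hk : ω k ≠ 0) {F : ℝ → ℝ}
    (hF : ∀ x, F x = ∑' j, a j * cos (ω j * x)) (t₁ t₂ : ℝ) {p : ℝ} (hp : 1 ≤ p) :
    (2 * π) ^ (1 / p) * (|a k| * |cos (ω k * t₁) - cos (ω k * t₂)| / 2) ≤
      (∫ x in (0:ℝ)..2 * π, |F (x - t₁) - F (x - t₂)| ^ p) ^ (1 / p) := by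
  have hFc : Continuous F := by
    rw [show F = _ from funext hF]; exact continuous_tsum_mul_cos ha _
  have hint : ∀ t, IntervalIntegrable (fun x => F (x - t) * cos (ω k * x)) volume 0 (2 * π) :=
    fun t => ((hFc.comp (continuous_sub_right t)).mul (by fun_prop)).intervalIntegrable _ _
  have hcoef : ∀ t, ∫ x in (0:ℝ)..2 * π, F (x - t) * cos (ω k * x) = π * a k * cos (ω k * t) :=
    fun t => by simp_rw [hF]; exact integral_tsum_mul_cos_mul_sub_mul_cos ha hω hk t
  have hg : Continuous fun x => F (x - t₁) - F (x - t₂) := by fun_prop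
  have h2π : (0 : ℝ) < 2 * π := by positivity
  have hHolder : π * (|a k| * |cos (ω k * t₁) - cos (ω k * t₂)|) ≤
      (2 * π) ^ (1 - 1 / p) * (∫ x in (0:ℝ)..2 * π, |F (x - t₁) - F (x - t₂)| ^ p) ^ (1 / p) :=
    calc π * (|a k| * |cos (ω k * t₁) - cos (ω k * t₂)|)
        = |∫ x in (0:ℝ)..2 * π, (F (x - t₁) - F (x - t₂)) * cos (ω k * x)| := by
          simp_rw [sub_mul]
          rw [intervalIntegral.integral_sub (hint t₁) (hint t₂), hcoef, hcoef, ← mul_sub,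
            abs_mul, abs_mul, abs_of_pos pi_pos, mul_assoc]
      _ ≤ ∫ x in (0:ℝ)..2 * π, |F (x - t₁) - F (x - t₂)| := abs_integral_mul_cos_le hg h2π.le _
      _ ≤ _ := by simpa using intervalIntegral_abs_le_rpow_mul hg h2π.le hp
  rw [rpow_sub h2π, rpow_one] at hHolder
  have := rpow_pos_of_pos h2π (1 / p)
  rw [div_mul_eq_mul_div, le_div_iff₀ this] at hHolder
  nlinarith

theorem summable_abs_two_rpow_neg_add_mul {s : ℝ} (hs : 0 < s) (c : ℝ) :
    Summable fun j : ℕ => |(2 : ℝ) ^ (-((j : ℝ) + c) * s)| := by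
  have hr : (2 : ℝ) ^ (-s) < 1 := rpow_lt_one_of_one_lt_of_neg one_lt_two (neg_lt_zero.mpr hs)
  refine ((summable_geometric_of_lt_one (by positivity) hr).mul_left
    ((2 : ℝ) ^ (-c * s))).congr fun j => ?_
  rw [abs_of_pos (by positivity), ← rpow_natCast, ← rpow_mul zero_le_two, ← rpow_add two_pos]
  congr 1; ring

/-- For `s > 0`, `f(x) = Σ_{j=3}^∞ 2^{-js} cos((11/8)·2^j·x)`, `λ_n = 1 + 1/n` and
`τ_n = 8nπ/(11·2^n)`: for every `1 ≤ p < ∞` and `n ≥ 3`,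
`2^{ns} ‖f(·-λ_nτ_n) - f(·-τ_n)‖_{L^p(0,2π)} ≥ (2π)^{1/p}`, even though `τ_n → 0⁺`
and `λ_n → 1`. -/
theorem stmt_12 (s : ℝ) (hs : 0 < s) (f : ℝ → ℝ)
    (hf : ∀ x : ℝ, f x = ∑' j : ℕ,
      (2 : ℝ) ^ (-(((j : ℝ) + 3)) * s) * Real.cos ((11 / 8) * 2 ^ (j + 3) * x))
    (lam τ : ℕ → ℝ)
    (hlam : ∀ n, lam n = 1 + 1 / (n : ℝ))
    (hτ : ∀ n, τ n = 8 * (n : ℝ) * π / (11 * 2 ^ n)) :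
    (∀ p : ℝ, 1 ≤ p → ∀ n : ℕ, 3 ≤ n →
      (2 : ℝ) ^ ((n : ℝ) * s)
          * (∫ x in (0:ℝ)..(2 * π), |f (x - lam n * τ n) - f (x - τ n)| ^ p) ^ (1 / p)
        ≥ (2 * π) ^ (1 / p)) ∧
    Tendsto τ atTop (nhdsWithin 0 (Set.Ioi 0)) ∧
    Tendsto lam atTop (nhds 1) := by
  set a : ℕ → ℝ := fun j => (2 : ℝ) ^ (-((j : ℝ) + 3) * s)
  have ha : Summable fun j => |a j| := summable_abs_two_rpow_neg_add_mul hs 3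
  have hf' : ∀ x, f x = ∑' j, a j * cos (((11 * 2 ^ j : ℕ) : ℝ) * x) := fun x => by
    rw [hf]; congr! 4; push_cast; ring
  have hω : Function.Injective fun j : ℕ => 11 * 2 ^ j := fun i j h =>
    Nat.pow_right_injective le_rfl (by simpa using h)
  refine ⟨fun p hp n hn => ?_, ?_, ?_⟩
  · obtain ⟨k, rfl⟩ := Nat.exists_eq_add_of_le' hn
    have hT : ((11 * 2 ^ k : ℕ) : ℝ) * τ (k + 3) = ((k + 3 : ℕ) : ℝ) * π := by
      rw [hτ]; push_cast; field_simp; ring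
    have hLT : ((11 * 2 ^ k : ℕ) : ℝ) * (lam (k + 3) * τ (k + 3)) = ((k + 4 : ℕ) : ℝ) * π := by
      rw [mul_left_comm, hT, hlam]; push_cast; field_simp; ring
    have hcoef := rpow_mul_abs_cos_sub_cos_le ha hω (k := k) (by positivity) hf'
      (lam (k + 3) * τ (k + 3)) (τ (k + 3)) hp
    have hsign : |(-1 : ℝ) ^ (k + 4) - (-1) ^ (k + 3)| = 2 := by
      rw [show (-1 : ℝ) ^ (k + 4) - (-1) ^ (k + 3) = -2 * (-1) ^ (k + 3) by ring, abs_mul,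
        abs_pow]
      norm_num
    rw [hLT, hT, cos_nat_mul_pi, cos_nat_mul_pi, hsign,
      mul_div_cancel_right₀ _ two_ne_zero] at hcoef
    have hak : (2 : ℝ) ^ (((k + 3 : ℕ) : ℝ) * s) * |a k| = 1 := by
      rw [abs_of_pos (by positivity), ← rpow_add two_pos]
      push_cast; ring_nf; exact rpow_zero 2
    calc _ ≥ (2 : ℝ) ^ (((k + 3 : ℕ) : ℝ) * s) * ((2 * π) ^ (1 / p) * |a k|) := by gcongr
      _ = (2 * π) ^ (1 / p) := by rw [mul_left_comm, hak, mul_one]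
  · convert tendsto_const_mul_div_two_pow_nhdsGT_zero (c := 8 * π / 11) (by positivity) using 1
    ext n; rw [hτ]; field_simp
  · rw [show lam = _ from funext hlam]
    simpa using tendsto_one_div_atTop_nhds_zero_nat.const_add (1 : ℝ)
end
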